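/- With the setup of the ε-resolvent walk: if the symmetric random walk X on ℤ² with step distribution j is recurrent, then the random walk Y with step distribution c(ε)^{-1} Σ_{n≥1} ε^n j^{(n)}(·) is also recurrent, for every ε ∈ (0,1). -/

import Mathlib

/-!
Summing the geometric series of characteristic functions, the walk `Y` has characteristic
function `ψ = (1 - ε) φ / (1 - ε φ)`, where `φ` is that of `X` (symmetry makes the sine parts
vanish, so `j^{(n)}` has characteristic function `φ ^ n`). Hence
`1 / (1 - ψ) = (1 - ε φ) / (1 - φ) ≥ (1 - ε) / (1 - φ)` pointwise, and the divergence of the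
Chung–Fuchs integral for `X` forces its divergence for `Y`.
-/

open Real MeasureTheory

/-- Convolution of two functions on `ℤ²`. -/
noncomputable def convZ2 (f g : ℤ × ℤ → ℝ) : ℤ × ℤ → ℝ :=
  fun x => ∑' y : ℤ × ℤ, f (x - y) * g y

/-- `n`-step transition probabilities (`nStep j n = j^{(n+1)}`). -/
noncomputable def nStep (j : ℤ × ℤ → ℝ) : ℕ → ℤ × ℤ → ℝ
  | 0 => j
  | (n + 1) => convZ2 (nStep j n) j

/-- Characteristic function of a symmetric step distribution on `ℤ²`. -/
noncomputable def charFnZ2 (f : ℤ × ℤ → ℝ) (θ : ℝ × ℝ) : ℝ :=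
  ∑' x : ℤ × ℤ, Real.cos (θ.1 * x.1 + θ.2 * x.2) * f x

/-- Recurrence of a symmetric random walk on `ℤ²` via the Chung–Fuchs criterion:
`∫_{[-π,π]²} dθ/(1-φ(θ)) = ∞`. -/
noncomputable def RecurrentCF (f : ℤ × ℤ → ℝ) : Prop :=
  ∫⁻ θ in Set.Icc ((-π, -π) : ℝ × ℝ) (π, π),
    ENNReal.ofReal (1 / (1 - charFnZ2 f θ)) = ⊤

lemma summable_mul_of_abs_le_one {ι : Type*} {c f : ι → ℝ} (hc : ∀ i, |c i| ≤ 1)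
    (hf : Summable f) : Summable fun i => c i * f i :=
  hf.abs.of_norm_bounded fun i => by
    rw [Real.norm_eq_abs, abs_mul]
    exact mul_le_of_le_one_left (abs_nonneg _) (hc i)

lemma summable_mul_prod {ι κ : Type*} {f : ι → ℝ} {g : κ → ℝ} (hf : Summable f)
    (hg : Summable g) : Summable fun p : ι × κ => f p.1 * g p.2 :=
  summable_mul_of_summable_norm (R := ℝ) (f := f) (g := g) hf.norm hg.norm

lemma tsum_mul_tsum_eq_tsum_prod {ι κ : Type*} {f : ι → ℝ} {g : κ → ℝ} (hf : Summable f)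
    (hg : Summable g) : (∑' i, f i) * ∑' k, g k = ∑' p : ι × κ, f p.1 * g p.2 :=
  tsum_mul_tsum_of_summable_norm (R := ℝ) (f := f) (g := g) hf.norm hg.norm

/-- The shear `(u, y) ↦ (u + y, y)`, which turns the convolution kernel into a product. -/
def addShear (G : Type*) [AddGroup G] : G × G ≃ G × G where
  toFun p := (p.1 + p.2, p.2)
  invFun q := (q.1 - q.2, q.2)
  left_inv p := by simp
  right_inv q := by simp

section Convolution

variable {f g : ℤ × ℤ → ℝ}

lemma summable_convZ2_kernel (hf : Summable f) (hg : Summable g) :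
    Summable fun p : (ℤ × ℤ) × (ℤ × ℤ) => f (p.1 - p.2) * g p.2 := by
  rw [← (addShear (ℤ × ℤ)).summable_iff]
  simpa [addShear, Function.comp_def] using summable_mul_prod hf hg

lemma summable_convZ2 (hf : Summable f) (hg : Summable g) : Summable (convZ2 f g) :=
  (summable_convZ2_kernel hf hg).prod

lemma tsum_convZ2 (hf : Summable f) (hg : Summable g) :
    ∑' x, convZ2 f g x = (∑' x, f x) * ∑' x, g x := by
  calc ∑' x, convZ2 f g x = ∑' p : (ℤ × ℤ) × (ℤ × ℤ), f (p.1 - p.2) * g p.2 :=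
        (summable_convZ2_kernel hf hg).tsum_prod.symm
    _ = ∑' q : (ℤ × ℤ) × (ℤ × ℤ), f q.1 * g q.2 := by
        rw [← (addShear (ℤ × ℤ)).tsum_eq]
        simp [addShear]
    _ = (∑' x, f x) * ∑' x, g x := (tsum_mul_tsum_eq_tsum_prod hf hg).symm

lemma convZ2_nonneg (hf : ∀ x, 0 ≤ f x) (hg : ∀ x, 0 ≤ g x) (x : ℤ × ℤ) :
    0 ≤ convZ2 f g x :=
  tsum_nonneg fun _ => mul_nonneg (hf _) (hg _)

lemma convZ2_neg (hf : ∀ x, f (-x) = f x) (hg : ∀ x, g (-x) = g x) (x : ℤ × ℤ) :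
    convZ2 f g (-x) = convZ2 f g x := by
  unfold convZ2
  rw [← (Equiv.neg (ℤ × ℤ)).tsum_eq]
  refine tsum_congr fun y => ?_
  rw [Equiv.neg_apply, hg, show -x - -y = -(x - y) by abel, hf]

end Convolution

noncomputable def pairingZ2 (θ : ℝ × ℝ) (x : ℤ × ℤ) : ℝ := θ.1 * x.1 + θ.2 * x.2

lemma pairingZ2_add (θ : ℝ × ℝ) (x y : ℤ × ℤ) :
    pairingZ2 θ (x + y) = pairingZ2 θ x + pairingZ2 θ y := by
  simp only [pairingZ2, Prod.fst_add, Prod.snd_add]; push_cast; ring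

lemma pairingZ2_neg (θ : ℝ × ℝ) (x : ℤ × ℤ) : pairingZ2 θ (-x) = -pairingZ2 θ x := by
  simp only [pairingZ2, Prod.fst_neg, Prod.snd_neg]; push_cast; ring

section CharFn

variable {f g : ℤ × ℤ → ℝ} (θ : ℝ × ℝ)

lemma charFnZ2_eq_tsum_cos_pairingZ2 (f : ℤ × ℤ → ℝ) :
    charFnZ2 f θ = ∑' x, cos (pairingZ2 θ x) * f x := rfl

lemma tsum_sin_pairingZ2_mul_eq_zero (hf : ∀ x, f (-x) = f x) :
    ∑' x, sin (pairingZ2 θ x) * f x = 0 := by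
  have h := (Equiv.neg (ℤ × ℤ)).tsum_eq fun x => sin (pairingZ2 θ x) * f x
  simp only [Equiv.neg_apply, pairingZ2_neg, sin_neg, hf, neg_mul, tsum_neg] at h
  linarith

lemma charFnZ2_convZ2 (hf : Summable f) (hg : Summable g) (hf' : ∀ x, f (-x) = f x)
    (hg' : ∀ x, g (-x) = g x) :
    charFnZ2 (convZ2 f g) θ = charFnZ2 f θ * charFnZ2 g θ := by
  set cf := fun x => cos (pairingZ2 θ x) * f x
  set cg := fun x => cos (pairingZ2 θ x) * g x
  set sf := fun x => sin (pairingZ2 θ x) * f x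
  set sg := fun x => sin (pairingZ2 θ x) * g x
  have hcf : Summable cf := summable_mul_of_abs_le_one (fun _ => abs_cos_le_one _) hf
  have hcg : Summable cg := summable_mul_of_abs_le_one (fun _ => abs_cos_le_one _) hg
  have hsf : Summable sf := summable_mul_of_abs_le_one (fun _ => abs_sin_le_one _) hf
  have hsg : Summable sg := summable_mul_of_abs_le_one (fun _ => abs_sin_le_one _) hg
  have hkernel : Summable fun p : (ℤ × ℤ) × (ℤ × ℤ) =>
      cos (pairingZ2 θ p.1) * (f (p.1 - p.2) * g p.2) :=
    summable_mul_of_abs_le_one (fun _ => abs_cos_le_one _) (summable_convZ2_kernel hf hg)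
  -- after the shear, `cos (a + b) = cos a cos b - sin a sin b` splits the sum into two products
  have hsplit : ∑' p : (ℤ × ℤ) × (ℤ × ℤ), cos (pairingZ2 θ p.1) * (f (p.1 - p.2) * g p.2)
      = ∑' q : (ℤ × ℤ) × (ℤ × ℤ), cf q.1 * cg q.2 - ∑' q : (ℤ × ℤ) × (ℤ × ℤ), sf q.1 * sg q.2 := by
    rw [← (addShear (ℤ × ℤ)).tsum_eq,
      ← (summable_mul_prod hcf hcg).tsum_sub (summable_mul_prod hsf hsg)]
    refine tsum_congr fun q => ?_
    simp only [addShear, Equiv.coe_fn_mk, add_sub_cancel_right, pairingZ2_add, cos_add, cf, cg,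
      sf, sg]
    ring
  calc charFnZ2 (convZ2 f g) θ
      = ∑' p : (ℤ × ℤ) × (ℤ × ℤ), cos (pairingZ2 θ p.1) * (f (p.1 - p.2) * g p.2) := by
        rw [hkernel.tsum_prod]
        exact tsum_congr fun x => tsum_mul_left.symm
    _ = (∑' x, cf x) * (∑' x, cg x) - (∑' x, sf x) * (∑' x, sg x) := by
        rw [hsplit, tsum_mul_tsum_eq_tsum_prod hcf hcg, tsum_mul_tsum_eq_tsum_prod hsf hsg]
    _ = charFnZ2 f θ * charFnZ2 g θ := by
        rw [tsum_sin_pairingZ2_mul_eq_zero θ hf', tsum_sin_pairingZ2_mul_eq_zero θ hg', mul_zero,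
          sub_zero]
        rfl

lemma abs_charFnZ2_le (hf : Summable f) : |charFnZ2 f θ| ≤ ∑' x, |f x| := by
  have hcos := summable_mul_of_abs_le_one (fun x => abs_cos_le_one (pairingZ2 θ x)) hf
  rw [charFnZ2_eq_tsum_cos_pairingZ2]
  calc |∑' x, cos (pairingZ2 θ x) * f x| ≤ ∑' x, |cos (pairingZ2 θ x) * f x| := by
        simpa only [Real.norm_eq_abs] using norm_tsum_le_tsum_norm hcos.norm
    _ ≤ ∑' x, |f x| := by
        refine hcos.abs.tsum_le_tsum (fun x => ?_) hf.abs
        rw [abs_mul]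
        exact mul_le_of_le_one_left (abs_nonneg _) (abs_cos_le_one _)

lemma charFnZ2_const_mul (c : ℝ) (f : ℤ × ℤ → ℝ) :
    charFnZ2 (fun x => c * f x) θ = c * charFnZ2 f θ := by
  simp only [charFnZ2_eq_tsum_cos_pairingZ2, mul_left_comm _ c, tsum_mul_left]

lemma charFnZ2_tsum {ι : Type*} {F : ι → ℤ × ℤ → ℝ} (hF : Summable (Function.uncurry F)) :
    charFnZ2 (fun x => ∑' i, F i x) θ = ∑' i, charFnZ2 (F i) θ := by
  have hcos : Summable (Function.uncurry fun i x => cos (pairingZ2 θ x) * F i x) :=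
    summable_mul_of_abs_le_one (fun _ => abs_cos_le_one _) hF
  simp only [charFnZ2_eq_tsum_cos_pairingZ2, ← tsum_mul_left]
  exact hcos.tsum_comm

end CharFn

structure IsSymmetricStepDistribution (j : ℤ × ℤ → ℝ) : Prop where
  nonneg : ∀ x, 0 ≤ j x
  neg_eq : ∀ x, j (-x) = j x
  summable : Summable j
  tsum_eq_one : ∑' x, j x = 1

namespace IsSymmetricStepDistribution

variable {j k : ℤ × ℤ → ℝ}

lemma convZ2 (hj : IsSymmetricStepDistribution j) (hk : IsSymmetricStepDistribution k) :
    IsSymmetricStepDistribution (convZ2 j k) where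
  nonneg := convZ2_nonneg hj.nonneg hk.nonneg
  neg_eq := convZ2_neg hj.neg_eq hk.neg_eq
  summable := summable_convZ2 hj.summable hk.summable
  tsum_eq_one := by rw [tsum_convZ2 hj.summable hk.summable, hj.tsum_eq_one, hk.tsum_eq_one, one_mul]

lemma nStep (hj : IsSymmetricStepDistribution j) (n : ℕ) :
    IsSymmetricStepDistribution (nStep j n) := by
  induction n with
  | zero => exact hj
  | succ n ih => exact ih.convZ2 hj

lemma abs_charFnZ2_le_one (hj : IsSymmetricStepDistribution j) (θ : ℝ × ℝ) :
    |charFnZ2 j θ| ≤ 1 := by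
  simpa only [abs_of_nonneg (hj.nonneg _), hj.tsum_eq_one] using abs_charFnZ2_le θ hj.summable

end IsSymmetricStepDistribution

section Resolvent

variable {j : ℤ × ℤ → ℝ}

lemma charFnZ2_nStep (hj : IsSymmetricStepDistribution j) (θ : ℝ × ℝ) (n : ℕ) :
    charFnZ2 (nStep j n) θ = charFnZ2 j θ ^ (n + 1) := by
  induction n with
  | zero => simp [nStep]
  | succ n ih =>
    rw [nStep, charFnZ2_convZ2 θ (hj.nStep n).summable hj.summable (hj.nStep n).neg_eq hj.neg_eq,
      ih, ← pow_succ]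

variable {ε : ℝ}

lemma summable_geometric_mul_nStep (hj : IsSymmetricStepDistribution j) (hε0 : 0 ≤ ε)
    (hε1 : ε < 1) : Summable fun p : ℕ × (ℤ × ℤ) => ε ^ (p.1 + 1) * nStep j p.1 p.2 := by
  have hnonneg : 0 ≤ fun p : ℕ × (ℤ × ℤ) => ε ^ (p.1 + 1) * nStep j p.1 p.2 :=
    fun p => mul_nonneg (pow_nonneg hε0 _) ((hj.nStep p.1).nonneg p.2)
  have hrows (n : ℕ) : ∑' x, ε ^ (n + 1) * nStep j n x = ε * ε ^ n := by
    rw [tsum_mul_left, (hj.nStep n).tsum_eq_one, mul_one, pow_succ']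
  have hrows_summable : Summable fun n : ℕ => ∑' x, ε ^ (n + 1) * nStep j n x := by
    simpa only [hrows] using (summable_geometric_of_lt_one hε0 hε1).mul_left ε
  have hrow_summable (n : ℕ) : Summable fun x => ε ^ (n + 1) * nStep j n x :=
    (hj.nStep n).summable.mul_left _
  exact (summable_prod_of_nonneg hnonneg).2 ⟨hrow_summable, hrows_summable⟩

lemma charFnZ2_resolvent (hj : IsSymmetricStepDistribution j) (hε0 : 0 < ε) (hε1 : ε < 1)
    (θ : ℝ × ℝ) :
    charFnZ2 (fun x => (ε / (1 - ε))⁻¹ * ∑' n : ℕ, ε ^ (n + 1) * nStep j n x) θ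
      = (1 - ε) * charFnZ2 j θ / (1 - ε * charFnZ2 j θ) := by
  have hφ := abs_le.mp (hj.abs_charFnZ2_le_one θ)
  have hεφ : ‖ε * charFnZ2 j θ‖ < 1 := by
    rw [Real.norm_eq_abs, abs_lt]
    constructor <;> nlinarith
  have hden : 1 - ε * charFnZ2 j θ ≠ 0 := by nlinarith
  rw [charFnZ2_const_mul, charFnZ2_tsum (F := fun n x => ε ^ (n + 1) * nStep j n x) θ
    (summable_geometric_mul_nStep hj hε0.le hε1)]
  simp only [charFnZ2_const_mul, charFnZ2_nStep hj, ← mul_pow]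
  simp only [pow_succ', tsum_mul_left]
  rw [tsum_geometric_of_norm_lt_one hεφ]
  field_simp

lemma one_sub_charFnZ2_resolvent (hj : IsSymmetricStepDistribution j) (hε0 : 0 < ε)
    (hε1 : ε < 1) (θ : ℝ × ℝ) :
    1 - charFnZ2 (fun x => (ε / (1 - ε))⁻¹ * ∑' n : ℕ, ε ^ (n + 1) * nStep j n x) θ
      = (1 - charFnZ2 j θ) / (1 - ε * charFnZ2 j θ) := by
  have hden : 0 < 1 - ε * charFnZ2 j θ := by
    nlinarith [(abs_le.mp (hj.abs_charFnZ2_le_one θ)).2]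
  rw [charFnZ2_resolvent hj hε0 hε1, eq_div_iff hden.ne', sub_mul, div_mul_cancel₀ _ hden.ne']
  ring

end Resolvent

lemma lintegral_eq_top_of_const_mul_le {α : Type*} [MeasurableSpace α] {μ : Measure α}
    {f g : α → ENNReal} {c : ENNReal} (hc : c ≠ 0) (hc' : c ≠ ⊤) (hf : ∫⁻ x, f x ∂μ = ⊤)
    (hfg : ∀ x, c * f x ≤ g x) : ∫⁻ x, g x ∂μ = ⊤ := by
  refine top_unique ?_
  calc ⊤ = c * ∫⁻ x, f x ∂μ := by rw [hf, ENNReal.mul_top hc]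
    _ = ∫⁻ x, c * f x ∂μ := (lintegral_const_mul' c f hc').symm
    _ ≤ ∫⁻ x, g x ∂μ := lintegral_mono hfg

/-- if the symmetric walk `X` with step distribution `j` is recurrent,
then so is the ε-resolvent walk `Y` with step distribution
`c(ε)⁻¹ Σ_{n≥1} ε^n j^{(n)}`, for every `ε ∈ (0,1)`. -/
theorem resolvent_walk_recurrent
    (j : ℤ × ℤ → ℝ) (hpos : ∀ x, 0 ≤ j x) (hsym : ∀ x, j (-x) = j x)
    (hsummable : Summable j) (hsum : ∑' x : ℤ × ℤ, j x = 1)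
    (hrec : RecurrentCF j)
    (ε : ℝ) (hε0 : 0 < ε) (hε1 : ε < 1) :
    RecurrentCF (fun x => (ε / (1 - ε))⁻¹ * ∑' n : ℕ, ε ^ (n + 1) * nStep j n x) := by
  have hj : IsSymmetricStepDistribution j := ⟨hpos, hsym, hsummable, hsum⟩
  refine lintegral_eq_top_of_const_mul_le (c := ENNReal.ofReal (1 - ε))
    (ENNReal.ofReal_pos.mpr (by linarith)).ne' ENNReal.ofReal_ne_top hrec fun θ => ?_
  have hφ : charFnZ2 j θ ≤ 1 := (abs_le.mp (hj.abs_charFnZ2_le_one θ)).2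
  rw [← ENNReal.ofReal_mul (by linarith), one_sub_charFnZ2_resolvent hj hε0 hε1, one_div_div,
    mul_one_div]
  exact ENNReal.ofReal_le_ofReal <| div_le_div_of_nonneg_right (by nlinarith) (by linarith)
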